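/- The polynomial P₁(x,y,z) = (xyz − z + y + x)² ∈ ℝ[x,y,z] is extremal in σ_P(2,2,2): whenever P₁ = g + h with g, h ∈ σ_P(2,2,2), there exists a real constant c ≥ 0 with g = c·P₁. -/

import Mathlib

/-!
For fixed `y, z`, `g` is a quadratic in `x` squeezed between `0` and
`P₁ = ((yz + 1) x + (y - z))²`, so it vanishes at the root of `P₁` and equals
`A(y, z) / (yz + 1)² · P₁`, where `A` is its `x²`-coefficient. The same squeeze applies to `A`,
a quadratic in `y` between `0` and `(zy + 1)²`, and then to the `y²`-coefficient of `A`, a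
quadratic in `z` between `0` and `z²`. Hence `g = c P₁` off the surface `z (yz + 1) = 0`, and
therefore as polynomials.
-/

open MvPolynomial

noncomputable section

/-- `σ_P(2,2,2)`: real polynomials in `x,y,z` of degree at most `2` in each variable that are
nonnegative on all of `ℝ³`. -/
def sigmaP222 : Set (MvPolynomial (Fin 3) ℝ) :=
  { p | p.degreeOf 0 ≤ 2 ∧ p.degreeOf 1 ≤ 2 ∧ p.degreeOf 2 ≤ 2 ∧
        ∀ x : Fin 3 → ℝ, 0 ≤ eval x p }

def IsQuadratic (f : ℝ → ℝ) : Prop :=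
  ∃ a b c : ℝ, ∀ t, f t = a * t ^ 2 + b * t + c

/-- Read off from three values, so that it depends linearly on `f`. -/
def quadCoeff (f : ℝ → ℝ) : ℝ := (f 1 + f (-1)) / 2 - f 0

lemma quadCoeff_eq {f : ℝ → ℝ} {a b c : ℝ} (hf : ∀ t, f t = a * t ^ 2 + b * t + c) :
    quadCoeff f = a := by
  simp only [quadCoeff, hf]; ring

lemma leadingCoeff_nonneg_of_quadratic_nonneg {a b c : ℝ}
    (h : ∀ t, 0 ≤ a * t ^ 2 + b * t + c) : 0 ≤ a := by
  have hd := discrim_le_zero fun t => by simpa [sq] using h t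
  have h₁ := h 1
  have h₂ := h (-1)
  simp only [discrim] at hd
  by_contra! ha
  nlinarith [sq_nonneg b, mul_nonpos_of_nonpos_of_nonneg ha.le (by linarith : 0 ≤ c + a)]

lemma quadratic_eq_mul_sq_of_nonneg_of_root {a b c r : ℝ} (h : ∀ t, 0 ≤ a * t ^ 2 + b * t + c)
    (hr : a * r ^ 2 + b * r + c = 0) (t : ℝ) : a * t ^ 2 + b * t + c = a * (t - r) ^ 2 := by
  have hd := discrim_le_zero fun t => by simpa [sq] using h t
  rw [discrim_eq_sq_of_quadratic_eq_zero (by simpa [sq] using hr)] at hd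
  have hb : b = -2 * a * r := by nlinarith [sq_nonneg (2 * a * r + b)]
  subst hb
  linear_combination hr

namespace IsQuadratic

variable {f : ℝ → ℝ} {L M : ℝ}

theorem quadCoeff_comp {F : ℝ → ℝ → ℝ} (hF : ∀ x, IsQuadratic (F x)) :
    IsQuadratic fun y => quadCoeff fun x => F x y := by
  obtain ⟨a₁, b₁, c₁, h₁⟩ := hF 1
  obtain ⟨a₂, b₂, c₂, h₂⟩ := hF (-1)
  obtain ⟨a₀, b₀, c₀, h₀⟩ := hF 0
  exact ⟨(a₁ + a₂) / 2 - a₀, (b₁ + b₂) / 2 - b₀, (c₁ + c₂) / 2 - c₀, fun y => by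
    simp only [quadCoeff, h₁, h₂, h₀]; ring⟩

theorem quadCoeff_mem_Icc (hf : IsQuadratic f) (h0 : ∀ t, 0 ≤ f t)
    (h1 : ∀ t, f t ≤ (L * t + M) ^ 2) : 0 ≤ quadCoeff f ∧ quadCoeff f ≤ L ^ 2 := by
  obtain ⟨a, b, c, hf⟩ := hf
  rw [quadCoeff_eq hf]
  refine ⟨leadingCoeff_nonneg_of_quadratic_nonneg fun t => hf t ▸ h0 t, ?_⟩
  have := leadingCoeff_nonneg_of_quadratic_nonneg (a := L ^ 2 - a) (b := 2 * L * M - b)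
    (c := M ^ 2 - c) fun t => by linear_combination h1 t - hf t
  linarith

/-- `f` vanishes at the root `-M / L` of the upper bound, so it is a multiple of its square. -/
theorem eq_quadCoeff_div_mul_sq (hf : IsQuadratic f) (h0 : ∀ t, 0 ≤ f t)
    (h1 : ∀ t, f t ≤ (L * t + M) ^ 2) (hL : L ≠ 0) (t : ℝ) :
    f t = quadCoeff f / L ^ 2 * (L * t + M) ^ 2 := by
  obtain ⟨a, b, c, hf⟩ := hf
  have hroot : a * (-M / L) ^ 2 + b * (-M / L) + c = 0 := by
    have := h1 (-M / L)
    rw [mul_div_cancel₀ _ hL, neg_add_cancel, hf] at this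
    exact le_antisymm (by simpa using this) (hf _ ▸ h0 _)
  rw [quadCoeff_eq hf, hf, quadratic_eq_mul_sq_of_nonneg_of_root (fun t => hf t ▸ h0 t) hroot]
  field_simp
  ring

end IsQuadratic

theorem Polynomial.isQuadratic_eval {q : Polynomial ℝ} (hq : q.natDegree ≤ 2) :
    IsQuadratic q.eval :=
  ⟨q.coeff 2, q.coeff 1, q.coeff 0, fun t => by
    show q.eval t = _
    rw [Polynomial.eval_eq_sum_range' (n := 3) (by omega)]
    simp only [Finset.sum_range_succ, Finset.sum_range_zero]
    ring⟩

theorem MvPolynomial.isQuadratic_eval_update {σ : Type*} [DecidableEq σ]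
    {p : MvPolynomial σ ℝ} {i : σ} (hp : p.degreeOf i ≤ 2) (v : σ → ℝ) :
    IsQuadratic fun t => eval (Function.update v i t) p := by
  set e := (Equiv.optionSubtypeNe i).symm
  have heval (t : ℝ) : eval (Function.update v i t) p =
      eval (fun x => Option.elim x t fun b : {b // b ≠ i} => v b) (rename e p) := by
    rw [eval_rename]
    congr 2
    funext j
    by_cases hj : j = i
    · subst hj; simp [e]
    · simp [e, hj, Equiv.optionSubtypeNe_symm_apply]
  simp_rw [heval, optionEquivLeft_elim_eval]
  refine Polynomial.isQuadratic_eval (Polynomial.natDegree_map_le.trans ?_)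
  rwa [← degreeOf_eq_natDegree]

theorem MvPolynomial.eq_of_eval_eq_of_eval_ne_zero {σ R : Type*} [CommRing R] [IsDomain R]
    [Infinite R] {p₁ p₂ q : MvPolynomial σ R} (hq : q ≠ 0)
    (h : ∀ v, eval v q ≠ 0 → eval v p₁ = eval v p₂) : p₁ = p₂ := by
  have hprod : (p₁ - p₂) * q = 0 := MvPolynomial.funext fun v => by
    by_cases hv : eval v q = 0
    · simp [hv]
    · simp [h v hv]
  exact sub_eq_zero.1 ((mul_eq_zero.1 hprod).resolve_right hq)

theorem exists_const_eq_mul_of_separately_quadratic_le {G : ℝ → ℝ → ℝ → ℝ}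
    (hx : ∀ y z, IsQuadratic (G · y z)) (hy : ∀ x z, IsQuadratic (G x · z))
    (hz : ∀ x y, IsQuadratic (G x y ·)) (h0 : ∀ x y z, 0 ≤ G x y z)
    (h1 : ∀ x y z, G x y z ≤ ((y * z + 1) * x + (y - z)) ^ 2) :
    ∃ c, 0 ≤ c ∧ ∀ x y z, z ≠ 0 → y * z + 1 ≠ 0 →
      G x y z = c * ((y * z + 1) * x + (y - z)) ^ 2 := by
  set A := fun y z => quadCoeff (G · y z)
  set a := fun z => quadCoeff (A · z)
  have hAq (z : ℝ) : IsQuadratic (A · z) := IsQuadratic.quadCoeff_comp (hy · z)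
  have haq : IsQuadratic a := IsQuadratic.quadCoeff_comp fun y =>
    IsQuadratic.quadCoeff_comp (hz · y)
  have hA (y z : ℝ) : 0 ≤ A y z ∧ A y z ≤ (z * y + 1) ^ 2 := by
    rw [mul_comm z y]
    exact (hx y z).quadCoeff_mem_Icc (h0 · y z) (h1 · y z)
  have ha (z : ℝ) : 0 ≤ a z ∧ a z ≤ (1 * z + 0) ^ 2 := by
    simpa using (hAq z).quadCoeff_mem_Icc (hA · z |>.1) (hA · z |>.2)
  refine ⟨quadCoeff a, (haq.quadCoeff_mem_Icc (ha · |>.1) (ha · |>.2)).1,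
    fun x y z hz0 hyz => ?_⟩
  have ha_eq : a z = quadCoeff a * z ^ 2 := by
    simpa using haq.eq_quadCoeff_div_mul_sq (ha · |>.1) (ha · |>.2) one_ne_zero z
  have hA_eq : A y z = quadCoeff a * (y * z + 1) ^ 2 := calc
    A y z = a z / z ^ 2 * (z * y + 1) ^ 2 :=
      (hAq z).eq_quadCoeff_div_mul_sq (hA · z |>.1) (hA · z |>.2) hz0 y
    _ = quadCoeff a * (y * z + 1) ^ 2 := by rw [ha_eq]; field_simp
  calc G x y z = A y z / (y * z + 1) ^ 2 * ((y * z + 1) * x + (y - z)) ^ 2 :=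
      (hx y z).eq_quadCoeff_div_mul_sq (h0 · y z) (h1 · y z) hyz x
    _ = quadCoeff a * ((y * z + 1) * x + (y - z)) ^ 2 := by rw [hA_eq]; field_simp

/-- Proposition 6 (part): `P₁(x,y,z) = (xyz − z + y + x)²` is extremal in `σ_P(2,2,2)`. -/
theorem P1_extremal_in_sigmaP (P₁ : MvPolynomial (Fin 3) ℝ)
    (hP₁ : P₁ = (X 0 * X 1 * X 2 - X 2 + X 1 + X 0) ^ 2) :
    ∀ g h : MvPolynomial (Fin 3) ℝ, g ∈ sigmaP222 → h ∈ sigmaP222 → P₁ = g + h →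
      ∃ c : ℝ, 0 ≤ c ∧ g = C c * P₁ := by
  rintro g h ⟨hg0, hg1, hg2, hg⟩ ⟨-, -, -, hh⟩ rfl
  have hsum (x y z : ℝ) :
      eval ![x, y, z] g + eval ![x, y, z] h = ((y * z + 1) * x + (y - z)) ^ 2 := by
    rw [← map_add, hP₁]
    simp only [map_pow, map_add, map_sub, map_mul, eval_X, Matrix.cons_val_zero,
      Matrix.cons_val_one, Matrix.cons_val]
    ring
  obtain ⟨c, hc, hG⟩ := exists_const_eq_mul_of_separately_quadratic_le
    (G := fun x y z => eval ![x, y, z] g)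
    (fun y z => by
      convert isQuadratic_eval_update hg0 ![0, y, z] using 4; funext j; fin_cases j <;> rfl)
    (fun x z => by
      convert isQuadratic_eval_update hg1 ![x, 0, z] using 4; funext j; fin_cases j <;> rfl)
    (fun x y => by
      convert isQuadratic_eval_update hg2 ![x, y, 0] using 4; funext j; fin_cases j <;> rfl)
    (fun x y z => hg _) (fun x y z => by linarith [hsum x y z, hh ![x, y, z]])
  refine ⟨c, hc, eq_of_eval_eq_of_eval_ne_zero (q := X 2 * (X 1 * X 2 + 1)) ?_ fun v hv => ?_⟩
  · intro hq
    simpa using congrArg (eval ![0, 1, 1]) hq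
  · have hv_eta : v = ![v 0, v 1, v 2] := by funext j; fin_cases j <;> rfl
    simp only [map_mul, map_add, map_one, eval_X, ne_eq, mul_eq_zero, not_or] at hv
    rw [hv_eta, map_mul, eval_C, map_add, hsum]
    exact hG _ _ _ hv.1 hv.2
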